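/- arXiv:1012.2040 — 2 statements merged into one kernel-verified Lean document; each statement's English description precedes it below -/
import Mathlib

section
/- If κ is an inaccessible cardinal and λ ≥ κ, then TP(κ,λ) holds if and only if SP(κ,λ) holds, and ITP(κ,λ) holds if and only if ISP(κ,λ) holds. -/
open Cardinal Set

/-! Combinatorial framework: `P_κ λ`, clubs, stationarity, thin/slender lists,
branches, the principles `TP`, `SP`, `ITP`, `ISP`, the ideals `I_IT`, `I_IS`,
ultrafilter notions, ordinal clubs, and square sequences. -/

/-- `P_κ λ`: the collection of subsets of (the set of ordinals below) `λ` of size `< κ`. -/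
def Pk (κ lam : Cardinal.{0}) : Set (Set Ordinal.{0}) :=
  {a | (∀ α ∈ a, α < lam.ord) ∧ #a < Cardinal.lift.{1} κ}

/-- `C` is club in `P_κ X` (represented by `S`, a collection of subsets of `X`):
cofinal in `(S, ⊆)` and closed under unions of `⊆`-increasing chains of length `< κ`. -/
def IsClubIn {X : Type*} (κ : Cardinal.{0}) (S : Set (Set X)) (C : Set (Set X)) : Prop :=
  C ⊆ S ∧ (∀ a ∈ S, ∃ c ∈ C, a ⊆ c) ∧
    ∀ δ : Ordinal.{0}, 0 < δ → δ.card < κ →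
      ∀ f : Ordinal.{0} → Set X, (∀ β < δ, f β ∈ C) →
        (∀ β γ, β ≤ γ → γ < δ → f β ⊆ f γ) →
        (⋃ β ∈ Set.Iio δ, f β) ∈ C

/-- `T` is stationary in `P_κ X`: it meets every club. -/
def IsStatIn {X : Type*} (κ : Cardinal.{0}) (S T : Set (Set X)) : Prop :=
  T ⊆ S ∧ ∀ C, IsClubIn κ S C → (T ∩ C).Nonempty

/-- A `P_κ λ`-list: `d a ⊆ a` for every `a ∈ P_κ λ`. -/
def IsList (κ lam : Cardinal) (d : Set Ordinal → Set Ordinal) : Prop :=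
  ∀ a ∈ Pk κ lam, d a ⊆ a

/-- A thin `P_κ λ`-list: on a club of `c`'s, `|{d_a ∩ c : c ⊆ a ∈ P_κ λ}| < κ`. -/
def IsThin (κ lam : Cardinal) (d : Set Ordinal → Set Ordinal) : Prop :=
  ∃ C, IsClubIn κ (Pk κ lam) C ∧
    ∀ c ∈ C, #{x : Set Ordinal | ∃ a ∈ Pk κ lam, c ⊆ a ∧ x = d a ∩ c} < Cardinal.lift.{1} κ

/-- `H_θ`: sets hereditarily of cardinality `< θ`. -/
def HSet (θ : Cardinal.{0}) : Set ZFSet.{0} :=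
  {x | ZFSet.Hereditarily (fun y => #y.toSet < Cardinal.lift.{1} θ) x}

/-- `x` is the von Neumann ordinal corresponding to the ordinal `α`. -/
def IsOrdZF (x : ZFSet) (α : Ordinal) : Prop :=
  x.IsOrdinal ∧ x.rank = α

/-- The ZFC set `x` codes the set of ordinals `b`. -/
def CodesSet (x : ZFSet) (b : Set Ordinal) : Prop :=
  ∀ y, y ∈ x ↔ ∃ α ∈ b, IsOrdZF y α

/-- `M ∩ λ`: the set of ordinals below `λ` whose von Neumann code lies in `M`. -/
def ordsOf (lam : Cardinal) (M : Set ZFSet) : Set Ordinal :=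
  {α | α < lam.ord ∧ ∃ x ∈ M, IsOrdZF x α}

/-- A slender `P_κ λ`-list: for every sufficiently large regular `θ` there is a club
`C ⊆ P_κ H_θ` such that `d_{M ∩ λ} ∩ b ∈ M` for all `M ∈ C` and all countable `b ∈ M`
with `b ⊆ λ`. -/
def IsSlender (κ lam : Cardinal) (d : Set Ordinal → Set Ordinal) : Prop :=
  ∃ θ₀ : Cardinal, ∀ θ, θ₀ ≤ θ → θ.IsRegular →
    ∃ C, IsClubIn κ {M : Set ZFSet.{0} | M ⊆ HSet θ ∧ #M < Cardinal.lift.{1} κ} C ∧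
      ∀ M ∈ C, ∀ b : Set Ordinal, b.Countable → (∀ α ∈ b, α < lam.ord) →
        (∃ x ∈ M, CodesSet x b) →
        ∃ x ∈ M, CodesSet x (d (ordsOf lam M) ∩ b)

/-- `e` is a cofinal branch of the list `d`. -/
def IsCofBranch (κ lam : Cardinal) (d : Set Ordinal → Set Ordinal) (e : Set Ordinal) : Prop :=
  (∀ α ∈ e, α < lam.ord) ∧
    ∀ a ∈ Pk κ lam, ∃ z ∈ Pk κ lam, a ⊆ z ∧ e ∩ a = d z ∩ a

/-- `e` is an ineffable branch of the list `d`. -/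
def IsIneffBranch (κ lam : Cardinal) (d : Set Ordinal → Set Ordinal) (e : Set Ordinal) : Prop :=
  (∀ α ∈ e, α < lam.ord) ∧
    IsStatIn κ (Pk κ lam) {a ∈ Pk κ lam | e ∩ a = d a}

/-- `TP(κ,λ)`: every thin `P_κ λ`-list has a cofinal branch. -/
def TP (κ lam : Cardinal) : Prop :=
  ∀ d, IsList κ lam d → IsThin κ lam d → ∃ e, IsCofBranch κ lam d e

/-- `SP(κ,λ)`: every slender `P_κ λ`-list has a cofinal branch. -/
def SP (κ lam : Cardinal) : Prop :=
  ∀ d, IsList κ lam d → IsSlender κ lam d → ∃ e, IsCofBranch κ lam d e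

/-- `ITP(κ,λ)`: every thin `P_κ λ`-list has an ineffable branch. -/
def ITP (κ lam : Cardinal) : Prop :=
  ∀ d, IsList κ lam d → IsThin κ lam d → ∃ e, IsIneffBranch κ lam d e

/-- `ISP(κ,λ)`: every slender `P_κ λ`-list has an ineffable branch. -/
def ISP (κ lam : Cardinal) : Prop :=
  ∀ d, IsList κ lam d → IsSlender κ lam d → ∃ e, IsIneffBranch κ lam d e

/-- The list `d` is `A`-effable. -/
def IsEffable (κ lam : Cardinal) (d : Set Ordinal → Set Ordinal) (A : Set (Set Ordinal)) : Prop :=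
  ∀ S, S ⊆ A → IsStatIn κ (Pk κ lam) S →
    ∃ a ∈ S, ∃ b ∈ S, a ⊆ b ∧ d a ≠ d b ∩ a

/-- The ideal `I_IT[κ,λ]`. -/
def IIT (κ lam : Cardinal) : Set (Set (Set Ordinal)) :=
  {A | A ⊆ Pk κ lam ∧ ∃ d, IsList κ lam d ∧ IsThin κ lam d ∧ IsEffable κ lam d A}

/-- The ideal `I_IS[κ,λ]`. -/
def IIS (κ lam : Cardinal) : Set (Set (Set Ordinal)) :=
  {A | A ⊆ Pk κ lam ∧ ∃ d, IsList κ lam d ∧ IsSlender κ lam d ∧ IsEffable κ lam d A}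

/-- The filter `F_IT[κ,λ]` dual to `I_IT[κ,λ]`. -/
def FIT (κ lam : Cardinal) : Set (Set (Set Ordinal)) :=
  {A | A ⊆ Pk κ lam ∧ (Pk κ lam \ A) ∈ IIT κ lam}

/-- `U` is an ultrafilter on the set `X`. -/
def IsUFOn {α : Type*} (X : Set α) (U : Set (Set α)) : Prop :=
  (∀ A ∈ U, A ⊆ X) ∧ X ∈ U ∧ ∅ ∉ U ∧
    (∀ A ∈ U, ∀ B, A ⊆ B → B ⊆ X → B ∈ U) ∧
    (∀ A ∈ U, ∀ B ∈ U, A ∩ B ∈ U) ∧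
    (∀ A, A ⊆ X → (A ∈ U ∨ X \ A ∈ U))

/-- `U` is `κ`-complete: closed under intersections of fewer than `κ` of its members. -/
def KComplete (κ : Cardinal.{0}) (X : Set (Set Ordinal)) (U : Set (Set (Set Ordinal))) : Prop :=
  ∀ s : Set (Set (Set Ordinal)), s ⊆ U → #s < Cardinal.lift.{1} κ → X ∩ ⋂₀ s ∈ U

/-- `U` is fine on `P_κ λ`. -/
def Fine (κ lam : Cardinal) (U : Set (Set (Set Ordinal))) : Prop :=
  ∀ x < lam.ord, {a ∈ Pk κ lam | x ∈ a} ∈ U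

/-- `U` is normal on `P_κ λ`: closed under diagonal intersections. -/
def NormalUF (κ lam : Cardinal) (U : Set (Set (Set Ordinal))) : Prop :=
  ∀ A : Ordinal → Set (Set Ordinal), (∀ x < lam.ord, A x ∈ U) →
    {a ∈ Pk κ lam | ∀ x ∈ a, a ∈ A x} ∈ U

/-- `κ` is strongly compact: for every `λ ≥ κ` there is a `κ`-complete fine
ultrafilter on `P_κ λ`. -/
def IsStronglyCompact (κ : Cardinal) : Prop :=
  ∀ lam : Cardinal, κ ≤ lam →
    ∃ U, IsUFOn (Pk κ lam) U ∧ KComplete κ (Pk κ lam) U ∧ Fine κ lam U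

/-- `κ` is supercompact: for every `λ ≥ κ` there is a `κ`-complete normal fine
ultrafilter on `P_κ λ`. -/
def IsSupercompact (κ : Cardinal) : Prop :=
  ∀ lam : Cardinal, κ ≤ lam →
    ∃ U, IsUFOn (Pk κ lam) U ∧ KComplete κ (Pk κ lam) U ∧ Fine κ lam U ∧ NormalUF κ lam U

/-- `C` is club in the ordinal `o`: unbounded in `o` and closed. -/
def OrdClub (o : Ordinal) (C : Set Ordinal) : Prop :=
  C ⊆ Set.Iio o ∧ (∀ β < o, ∃ γ ∈ C, β ≤ γ) ∧
    ∀ α < o, 0 < α → sSup (C ∩ Set.Iio α) = α → α ∈ C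

/-- `S` is stationary in the ordinal `o`. -/
def OrdStat (o : Ordinal) (S : Set Ordinal) : Prop :=
  S ⊆ Set.Iio o ∧ ∀ C, OrdClub o C → (S ∩ C).Nonempty

/-- `δ` is a limit point of `C`: `δ > 0` and `δ = sup (C ∩ δ)`. -/
def IsLimPt (C : Set Ordinal) (δ : Ordinal) : Prop :=
  0 < δ ∧ sSup (C ∩ Set.Iio δ) = δ

/-- `κ` is an ineffable cardinal. -/
def IsIneffableCard (κ : Cardinal) : Prop :=
  ∀ d : Ordinal → Set Ordinal, (∀ α < κ.ord, d α ⊆ Set.Iio α) →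
    ∃ e ⊆ Set.Iio κ.ord, OrdStat κ.ord {α | α < κ.ord ∧ e ∩ Set.Iio α = d α}

/-- A `□_E(κ,λ)`-sequence. -/
def IsSquareSeq (κ : Cardinal.{0}) (lam : Ordinal.{0}) (E : Set Ordinal.{0})
    (𝒞 : Ordinal.{0} → Set (Set Ordinal.{0})) : Prop :=
  (∀ α, Order.IsSuccLimit α → α ∈ E → α < lam →
    ((𝒞 α).Nonempty ∧ #(𝒞 α) < Cardinal.lift.{1} κ) ∧
      ∀ C ∈ 𝒞 α, OrdClub α C ∧ ∀ β, IsLimPt C β → β ∈ E → C ∩ Set.Iio β ∈ 𝒞 β) ∧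
  ¬∃ D, OrdClub lam D ∧ ∀ δ, IsLimPt D δ → δ ∈ E → δ < lam → D ∩ Set.Iio δ ∈ 𝒞 δ

/-- `□_E(κ,λ)` holds. -/
def SquareE (κ : Cardinal.{0}) (lam : Ordinal.{0}) (E : Set Ordinal.{0}) : Prop :=
  ∃ 𝒞, IsSquareSeq κ lam E 𝒞

/-- `(a, ∈) ≺ (λ, ∈)`: `a` is an elementary substructure of the ordinals below `lam`
(with `∈`, equivalently the order, as the only relation). -/
def ElemSubOrd (lam : Ordinal) (a : Set Ordinal) : Prop :=
  letI := FirstOrder.Language.orderStructure ↥a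
  letI := FirstOrder.Language.orderStructure ↥(Set.Iio lam)
  ∃ h : a ⊆ Set.Iio lam,
    ∀ (n : ℕ) (φ : FirstOrder.Language.order.Formula (Fin n)) (v : Fin n → ↥a),
      φ.Realize v ↔ φ.Realize fun i => Set.inclusion h (v i)

/-- `P'_κ λ`: the members `a` of `P_κ λ` with `a ∩ κ` an ordinal and `(a,∈) ≺ (λ,∈)`. -/
def P'k (κ lam : Cardinal) : Set (Set Ordinal) :=
  {a ∈ Pk κ lam | (∃ β : Ordinal, a ∩ Set.Iio κ.ord = Set.Iio β) ∧ ElemSubOrd lam.ord a}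

/-- `κ_a`: the ordinal `a ∩ κ` (for `a ∈ P'_κ λ`). -/
noncomputable def kapOf (κ : Cardinal) (a : Set Ordinal) : Ordinal :=
  sInf {β : Ordinal | a ∩ Set.Iio κ.ord ⊆ Set.Iio β}


/-! For inaccessible `κ` every `P_κ λ`-list is both thin and slender, so the two principles in
each pair quantify over the same lists.

Thinness is witnessed by the club `P_κ λ` itself: the traces `d_a ∩ c` are subsets of `c`, so
there are at most `2 ^ |c| < κ` of them. For slenderness, the `M ∈ P_κ H_θ` closed under taking
subsets of their countable members form a club, because each closure round adds at most
`|M| · 2 ^ ℵ₀ < κ` sets. If `x ∈ M` codes the countable set `b`, then `d_{M ∩ λ} ∩ b` is coded by a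
subset of `x`, which therefore lies in `M`. -/

universe u v

theorem Cardinal.mk_iUnion_lt_of_isRegular {α : Type u} {ι : Type v} {f : ι → Set α}
    {c : Cardinal.{u}} (hc : c.IsRegular) (hι : lift.{u} #ι < lift.{v} c)
    (hf : ∀ i, #(f i) < c) : #(⋃ i, f i) < c := by
  have hc' := hc.lift.{v}
  refine lift_lt.{u, v}.1 <| (mk_iUnion_le_lift f).trans_lt <| mul_lt_of_lt hc'.aleph0_le hι <|
    lift_iSup_lt_of_lt_cof_ord ?_ fun i => lift_lt.2 (hf i)
  rw [hc'.lift.cof_ord]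
  rwa [lift_umax.{v, u}, lift_lift]

section Club

variable {X : Type u}

def smallSubsets (κ : Cardinal.{0}) (H : Set X) : Set (Set X) :=
  {M | M ⊆ H ∧ #M < lift.{u} κ}

variable {κ : Cardinal.{0}}

theorem biUnion_mem_smallSubsets (hκ : κ.IsRegular) {H : Set X} {δ : Ordinal.{0}}
    (hδ : δ.card < κ) {f : Ordinal.{0} → Set X} (hf : ∀ β < δ, f β ∈ smallSubsets κ H) :
    (⋃ β ∈ Iio δ, f β) ∈ smallSubsets κ H := by
  refine ⟨iUnion₂_subset fun β hβ => (hf β hβ).1, ?_⟩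
  rw [biUnion_eq_iUnion]
  refine mk_iUnion_lt_of_isRegular hκ.lift ?_ fun β => (hf β β.2).2
  rw [Cardinal.mk_Iio_ordinal, lift_lift, lift_lift]
  exact lift_strictMono hδ

theorem isClubIn_smallSubsets (hκ : κ.IsRegular) (H : Set X) :
    IsClubIn κ (smallSubsets κ H) (smallSubsets κ H) :=
  ⟨subset_rfl, fun a ha => ⟨a, ha, subset_rfl⟩,
    fun _ _ hδ _ hf _ => biUnion_mem_smallSubsets hκ hδ hf⟩

def closureStep (F : X → Set X) (M : Set X) : Set X :=
  M ∪ ⋃ x ∈ M, F x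

theorem closureStep_mem_smallSubsets (hκ : κ.IsRegular) {H : Set X} {F : X → Set X}
    (hFH : ∀ x ∈ H, F x ⊆ H) (hF : ∀ x ∈ H, #(F x) < lift.{u} κ) {M : Set X}
    (hM : M ∈ smallSubsets κ H) : closureStep F M ∈ smallSubsets κ H := by
  refine ⟨union_subset hM.1 (iUnion₂_subset fun x hx => hFH x (hM.1 hx)), ?_⟩
  refine (mk_union_le _ _).trans_lt (add_lt_of_lt hκ.lift.aleph0_le hM.2 ?_)
  rw [biUnion_eq_iUnion]
  exact mk_iUnion_lt_of_isRegular hκ.lift (by simpa using hM.2) fun x => hF x (hM.1 x.2)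

theorem isClubIn_closedUnder (hκ : κ.IsRegular) (hω : ℵ₀ < κ) {H : Set X} {F : X → Set X}
    (hFH : ∀ x ∈ H, F x ⊆ H) (hF : ∀ x ∈ H, #(F x) < lift.{u} κ) :
    IsClubIn κ (smallSubsets κ H) {M ∈ smallSubsets κ H | ∀ x ∈ M, F x ⊆ M} := by
  refine ⟨fun M hM => hM.1, fun a ha => ?_, fun _ _ hδ _ hf _ => ?_⟩
  · set M : ℕ → Set X := fun n => (closureStep F)^[n] a
    have hstep : ∀ n, closureStep F (M n) = M (n + 1) := fun n =>
      (Function.iterate_succ_apply' _ n a).symm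
    have hM : ∀ n, M n ∈ smallSubsets κ H := fun n => by
      induction n with
      | zero => exact ha
      | succ n ih => exact hstep n ▸ closureStep_mem_smallSubsets hκ hFH hF ih
    refine ⟨⋃ n, M n, ⟨⟨iUnion_subset fun n => (hM n).1, ?_⟩, fun x hx => ?_⟩, subset_iUnion M 0⟩
    · exact mk_iUnion_lt_of_isRegular hκ.lift (by simpa using hω) fun n => (hM n).2
    · obtain ⟨n, hxn⟩ := mem_iUnion.1 hx
      calc F x ⊆ closureStep F (M n) := (subset_biUnion_of_mem hxn).trans subset_union_right
        _ = M (n + 1) := hstep n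
        _ ⊆ ⋃ n, M n := subset_iUnion M (n + 1)
  · refine ⟨biUnion_mem_smallSubsets hκ hδ fun β hβ => (hf β hβ).1, fun x hx => ?_⟩
    obtain ⟨β, hβ, hxβ⟩ := mem_iUnion₂.1 hx
    exact ((hf β hβ).2 x hxβ).trans (subset_biUnion_of_mem hβ)

end Club

theorem Cardinal.IsStrongPrelimit.two_power_lt_lift {κ : Cardinal.{v}} (hκ : κ.IsStrongPrelimit)
    {c : Cardinal.{max v u}} (hc : c < lift.{u} κ) : 2 ^ c < lift.{u} κ := by
  obtain ⟨μ, hμ, rfl⟩ := lt_lift_iff.1 hc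
  rw [← lift_two.{u, v}, ← lift_power]
  exact lift_lt.2 (hκ hμ)

theorem isThin_of_isRegular_of_isStrongPrelimit {κ : Cardinal.{0}} (hreg : κ.IsRegular)
    (hlim : κ.IsStrongPrelimit) (lam : Cardinal.{0}) (d : Set Ordinal.{0} → Set Ordinal.{0}) :
    IsThin κ lam d := by
  refine ⟨Pk κ lam, isClubIn_smallSubsets hreg (Iio lam.ord), fun c hc => ?_⟩
  have hsub : {x | ∃ a ∈ Pk κ lam, c ⊆ a ∧ x = d a ∩ c} ⊆ 𝒫 c := by
    rintro _ ⟨a, -, -, rfl⟩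
    exact inter_subset_right
  calc #{x | ∃ a ∈ Pk κ lam, c ⊆ a ∧ x = d a ∩ c} ≤ #(𝒫 c) := mk_le_mk_of_subset hsub
    _ = 2 ^ #c := mk_powerset c
    _ < lift.{1} κ := hlim.two_power_lt_lift hc.2

theorem isOrdZF_iff {y : ZFSet.{0}} {α : Ordinal.{0}} : IsOrdZF y α ↔ α.toZFSet = y :=
  ⟨fun ⟨hy, hα⟩ => hα ▸ hy.toZFSet_rank_eq,
    fun h => h ▸ ⟨ZFSet.isOrdinal_toZFSet α, Ordinal.rank_toZFSet α⟩⟩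

theorem CodesSet.toSet_eq {x : ZFSet.{0}} {b : Set Ordinal.{0}} (hx : CodesSet x b) :
    x.toSet = Ordinal.toZFSet '' b := by
  ext y
  exact (hx y).trans (by simp only [isOrdZF_iff, mem_image])

theorem CodesSet.sep {x : ZFSet.{0}} {b : Set Ordinal.{0}} (hx : CodesSet x b)
    (D : Set Ordinal.{0}) : CodesSet (ZFSet.sep (fun y => y.rank ∈ D) x) (D ∩ b) := by
  intro y
  rw [ZFSet.mem_sep, hx y]
  constructor
  · rintro ⟨⟨α, hα, hyα⟩, hy⟩
    exact ⟨α, ⟨hyα.2 ▸ hy, hα⟩, hyα⟩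
  · rintro ⟨α, ⟨hαD, hαb⟩, hyα⟩
    exact ⟨⟨α, hαb, hyα⟩, hyα.2 ▸ hαD⟩

theorem mem_HSet_of_subset {θ : Cardinal.{0}} {x y : ZFSet.{0}} (hx : x ∈ HSet θ) (hyx : y ⊆ x) :
    y ∈ HSet θ := by
  rw [HSet, mem_ofPred_eq, ZFSet.hereditarily_iff] at hx ⊢
  exact ⟨(mk_le_mk_of_subset fun z hz => hyx hz).trans_lt hx.1, fun z hz => hx.2 z (hyx hz)⟩

theorem mk_subsets_lt_of_countable {κ : Cardinal.{0}} (hω : ℵ₀ < κ) (hlim : κ.IsStrongPrelimit)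
    {x : ZFSet.{0}} (hx : x.toSet.Countable) : #{y : ZFSet.{0} | y ⊆ x} < lift.{1} κ := by
  have hinj : Function.Injective
      fun y : {y : ZFSet.{0} | y ⊆ x} => (⟨y.1.toSet, fun _ hz => y.2 hz⟩ : 𝒫 x.toSet) :=
    fun y z h => Subtype.ext (SetLike.coe_injective (congrArg Subtype.val h))
  calc #{y : ZFSet.{0} | y ⊆ x} ≤ #(𝒫 x.toSet) := mk_le_of_injective hinj
    _ = 2 ^ #x.toSet := mk_powerset _
    _ ≤ 2 ^ ℵ₀ := power_le_power_left two_ne_zero (mk_le_aleph0_iff.2 hx.to_subtype)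
    _ < lift.{1} κ := hlim.two_power_lt_lift (by simpa using hω)

theorem isSlender_of_isInaccessible {κ : Cardinal.{0}} (hκ : κ.IsInaccessible)
    (lam : Cardinal.{0}) (d : Set Ordinal.{0} → Set Ordinal.{0}) : IsSlender κ lam d := by
  set F : ZFSet.{0} → Set ZFSet.{0} := fun x => {y | y ⊆ x ∧ x.toSet.Countable}
  have hF : ∀ x, #(F x) < lift.{1} κ := fun x => by
    by_cases hx : x.toSet.Countable
    · exact (mk_le_mk_of_subset fun y hy => hy.1).trans_lt
        (mk_subsets_lt_of_countable hκ.aleph0_lt hκ.isStrongPrelimit hx)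
    · simpa [F, hx] using hκ.pos
  refine ⟨0, fun θ _ _ => ⟨_, isClubIn_closedUnder hκ.isRegular hκ.aleph0_lt
    (fun x hx y hy => mem_HSet_of_subset hx hy.1) (fun x _ => hF x), ?_⟩⟩
  rintro M ⟨-, hM⟩ b hb - ⟨x, hxM, hx⟩
  refine ⟨_, hM x hxM ⟨ZFSet.sep_subset, ?_⟩, hx.sep (d (ordsOf lam M))⟩
  rw [hx.toSet_eq]
  exact hb.image _

theorem inaccessible_TP_iff_SP_and_ITP_iff_ISP_general (κ lam : Cardinal.{0})
    (hκ : κ.IsInaccessible) :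
    (TP κ lam ↔ SP κ lam) ∧ (ITP κ lam ↔ ISP κ lam) := by
  have thin := isThin_of_isRegular_of_isStrongPrelimit hκ.isRegular hκ.isStrongPrelimit lam
  have slender := isSlender_of_isInaccessible hκ lam
  exact ⟨⟨fun h d hd _ => h d hd (thin d), fun h d hd _ => h d hd (slender d)⟩,
    ⟨fun h d hd _ => h d hd (thin d), fun h d hd _ => h d hd (slender d)⟩⟩

theorem inaccessible_TP_iff_SP_and_ITP_iff_ISP (κ lam : Cardinal.{0})
    (hκ : κ.IsInaccessible) (hle : κ ≤ lam) :
    (TP κ lam ↔ SP κ lam) ∧ (ITP κ lam ↔ ISP κ lam) :=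
  inaccessible_TP_iff_SP_and_ITP_iff_ISP_general κ lam hκ
end

section
/- A regular uncountable cardinal κ is supercompact if and only if for every λ ≥ κ, every P_κλ-list has an ineffable branch. -/
open Cardinal Set

/-!
Given a normal fine `κ`-complete ultrafilter `U` on `P_κ λ`, let `e` be the set of `x < λ` with
`x ∈ d_a` for `U`-almost all `a`. Normality gives `e ∩ a = d_a` for `U`-almost all `a`, and `U`
contains every club (Menas: a club contains all closure points of some `G : [λ]^{<ω} → P_κ λ`,
and normality puts the set of closure points in `U`), so `e` is an ineffable branch.

Conversely, code the subsets `X` of `P_κ λ` by ordinals below `λ' = 2 ^ 2 ^ λ` and let `d_a`, for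
`a ∈ P_κ λ'`, collect the codes of the `X` with `a ∩ λ ∈ X`. For an ineffable branch `e` put
`X ∈ U` iff the code of `X` lies in `e`. Each ultrafilter property concerns fewer than `κ` codes,
or for normality the codes of `A x` for `x ∈ a`, so it is decided correctly at any `a` with
`e ∩ a = d_a` that contains those codes; stationarity of such `a` meets the relevant club.
-/

universe u

def IsChainClosed {X : Type*} (κ : Cardinal.{0}) (C : Set (Set X)) : Prop :=
  ∀ δ : Ordinal.{0}, 0 < δ → δ.card < κ →
    ∀ f : Ordinal.{0} → Set X, (∀ β < δ, f β ∈ C) →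
      (∀ β γ, β ≤ γ → γ < δ → f β ⊆ f γ) → (⋃ β ∈ Iio δ, f β) ∈ C

theorem IsClubIn.isChainClosed {X : Type*} {κ : Cardinal.{0}} {S C : Set (Set X)}
    (hC : IsClubIn κ S C) : IsChainClosed κ C :=
  hC.2.2

theorem Set.Infinite.exists_smaller_exhaustion {α : Type u} {a : Set α} (hinf : a.Infinite)
    {μ : Cardinal.{0}} (hμ : Cardinal.lift.{u} μ = #a) :
    ∃ seg : Ordinal.{0} → Set α, Monotone seg ∧ (∀ ξ, seg ξ ⊆ a) ∧
      (∀ ξ < μ.ord, #(seg ξ) < #a) ∧ ∀ s : Finset α, ↑s ⊆ a → ∃ ξ < μ.ord, ↑s ⊆ seg ξ := by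
  have hμinf : ℵ₀ ≤ μ := by
    rw [← Cardinal.lift_le.{u}, hμ, Cardinal.lift_aleph0]
    have := hinf.to_subtype
    exact Cardinal.aleph0_le_mk a
  obtain ⟨e⟩ : Nonempty (a ≃ Iio μ.ord) := Cardinal.lift_mk_eq'.1 (by
    rw [Cardinal.mk_Iio_ordinal, Cardinal.card_ord, Cardinal.lift_lift, ← hμ, Cardinal.lift_lift])
  set seg : Ordinal.{0} → Set α := fun ξ => Subtype.val '' {y : a | (e y : Ordinal) < ξ}
  have hmono : Monotone seg := fun ξ ζ h =>
    image_mono fun y (hy : (e y : Ordinal) < ξ) => hy.trans_le h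
  refine ⟨seg, hmono, fun ξ => Subtype.coe_image_subset _ _, fun ξ hξ => ?_, fun s hs => ?_⟩
  · have hemb : Cardinal.lift.{1} #(seg ξ) ≤ Cardinal.lift.{u} #(Iio ξ) :=
      (Cardinal.lift_le.2 mk_image_le).trans <| Cardinal.lift_mk_le'.2
        ⟨⟨fun y => ⟨e y.1, y.2⟩, fun y z h => Subtype.ext (e.injective (Subtype.ext
          (congrArg Subtype.val h :)))⟩⟩
    rw [Cardinal.mk_Iio_ordinal, Cardinal.lift_lift] at hemb
    rw [← hμ]
    refine Cardinal.lift_lt.{u, 1}.1 ?_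
    rw [Cardinal.lift_lift]
    exact hemb.trans_lt (Cardinal.lift_lt.2 (Cardinal.lt_ord.1 hξ))
  · have hcover : (s : Set α) ⊆ ⋃ ξ : Iio μ.ord, seg ξ := fun x hx =>
      mem_iUnion.2 ⟨⟨_, (Cardinal.isSuccLimit_ord hμinf).succ_lt (e ⟨x, hs hx⟩).2⟩,
        ⟨x, hs hx⟩, show (e ⟨x, hs hx⟩ : Ordinal) < Order.succ _ from Order.lt_succ _, rfl⟩
    have : Nonempty (Iio μ.ord) := ⟨⟨0, Cardinal.ord_pos.2 (aleph0_pos.trans_le hμinf)⟩⟩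
    obtain ⟨ξ, hξ⟩ := (hmono.comp (Subtype.mono_coe (· ∈ Iio μ.ord))).directed_le
      |>.exists_mem_subset_of_finset_subset_biUnion hcover
    exact ⟨ξ.1, ξ.2, hξ⟩

/-- Induction on `#a`: the union over an infinite `a` is the union of the increasing chain of
unions over the smaller segments of `a`. -/
theorem IsChainClosed.biUnion_finset_mem {X : Type*} {α : Type u} {κ : Cardinal.{0}}
    {C : Set (Set X)} (hC : IsChainClosed κ C) {G : Finset α → Set X} (hG : Monotone G)
    (hGC : ∀ s, G s ∈ C) (a : Set α) (ha : #a < Cardinal.lift.{u} κ) :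
    (⋃ (s : Finset α) (_ : ↑s ⊆ a), G s) ∈ C := by
  induction hμ : #a using WellFoundedLT.induction generalizing a with
  | ind μ IH =>
  subst hμ
  rcases a.finite_or_infinite with hfin | hinf
  · have hunion : (⋃ (s : Finset α) (_ : ↑s ⊆ a), G s) = G hfin.toFinset :=
      (iUnion₂_subset fun s hs => hG (by simpa using hs)).antisymm
        (subset_biUnion_of_mem (u := G) (show ↑hfin.toFinset ⊆ a by simp))
    exact hunion ▸ hGC _
  obtain ⟨μ, hμκ, hμ⟩ := Cardinal.lt_lift_iff.1 ha
  obtain ⟨seg, hseg_mono, hseg_sub, hseg_card, hseg_fin⟩ :=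
    hinf.exists_smaller_exhaustion hμ
  have hμ0 : μ ≠ 0 := fun h0 => Cardinal.mk_ne_zero_iff.2 hinf.nonempty.to_subtype
    (by rw [← hμ, h0, Cardinal.lift_zero])
  have hchain := hC μ.ord (Cardinal.ord_pos.2 (pos_iff_ne_zero.2 hμ0)) (by rwa [Cardinal.card_ord])
    (fun ξ => ⋃ (s : Finset α) (_ : ↑s ⊆ seg ξ), G s)
    (fun ξ hξ => IH _ (hseg_card ξ hξ) _ ((hseg_card ξ hξ).trans ha) rfl)
    (fun ξ ζ h _ => iUnion₂_mono' fun s hs => ⟨s, hs.trans (hseg_mono h), subset_rfl⟩)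
  convert hchain using 1
  apply Subset.antisymm
  · refine iUnion₂_subset fun s hs => ?_
    obtain ⟨ξ, hξ, hsξ⟩ := hseg_fin s hs
    have hGs : G s ⊆ ⋃ (t : Finset α) (_ : ↑t ⊆ seg ξ), G t :=
      subset_iUnion₂ (s := fun t _ => G t) s hsξ
    exact hGs.trans
      (subset_iUnion₂ (s := fun ζ _ => ⋃ (t : Finset α) (_ : ↑t ⊆ seg ζ), G t) ξ hξ)
  · exact iUnion₂_subset fun ξ _ => iUnion₂_mono' fun s hs =>
      ⟨s, hs.trans (hseg_sub ξ), subset_rfl⟩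

section Pk

variable {κ lam : Cardinal.{0}}

theorem inter_Iio_mem_Pk {lam' : Cardinal.{0}} {a : Set Ordinal.{0}} (ha : a ∈ Pk κ lam') :
    a ∩ Iio lam.ord ∈ Pk κ lam :=
  ⟨fun _ hα => hα.2, (Cardinal.mk_le_mk_of_subset inter_subset_left).trans_lt ha.2⟩

theorem mem_Pk_of_finite (hunc : ℵ₀ < κ) {a : Set Ordinal.{0}} (ha : a.Finite)
    (hlt : ∀ α ∈ a, α < lam.ord) : a ∈ Pk κ lam :=
  ⟨hlt, ha.lt_aleph0.trans (by simpa using hunc)⟩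

theorem iUnion_mem_Pk (hκ : κ.IsRegular) {ι : Type 1} (hι : #ι < Cardinal.lift.{1} κ)
    {f : ι → Set Ordinal.{0}} (hf : ∀ i, f i ∈ Pk κ lam) : ⋃ i, f i ∈ Pk κ lam := by
  refine ⟨fun α hα => ?_, (card_iUnion_lt_iff_forall_of_isRegular hκ.lift hι).2 fun i => (hf i).2⟩
  obtain ⟨i, hi⟩ := mem_iUnion.1 hα
  exact (hf i).1 α hi

theorem union_mem_Pk (hunc : ℵ₀ < κ) {a b : Set Ordinal.{0}} (ha : a ∈ Pk κ lam)
    (hb : b ∈ Pk κ lam) : a ∪ b ∈ Pk κ lam :=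
  ⟨fun α hα => hα.elim (ha.1 α) (hb.1 α), (mk_union_le a b).trans_lt
    (Cardinal.add_lt_of_lt (by simpa using hunc.le) ha.2 hb.2)⟩

theorem Pk_isChainClosed (hκ : κ.IsRegular) : IsChainClosed κ (Pk κ lam) := by
  intro δ _ hδ f hf _
  rw [biUnion_eq_iUnion]
  exact iUnion_mem_Pk hκ (by rwa [Cardinal.mk_Iio_ordinal, Cardinal.lift_lt])
    fun β => hf β β.2

end Pk

noncomputable def finsetHull {α β : Type*} (next : Set α → Set α) (base : Finset β → Set α)
    (s : Finset β) : Set α :=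
  next (base s ∪ ⋃ t : {t // t ⊂ s}, finsetHull next base t)
termination_by s.card
decreasing_by exact Finset.card_lt_card t.2

theorem finsetHull_mem_and_subset {κ lam : Cardinal.{0}} (hκ : κ.IsRegular) (hunc : ℵ₀ < κ)
    {C : Set (Set Ordinal.{0})} (hCP : C ⊆ Pk κ lam) {next : Set Ordinal.{0} → Set Ordinal.{0}}
    (hnext : ∀ a ∈ Pk κ lam, next a ∈ C ∧ a ⊆ next a) {β : Type 1}
    {base : Finset β → Set Ordinal.{0}} (hbase : ∀ s, base s ∈ Pk κ lam) (s : Finset β) :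
    finsetHull next base s ∈ C ∧
      base s ∪ ⋃ t : {t // t ⊂ s}, finsetHull next base t ⊆ finsetHull next base s := by
  induction s using Finset.strongInduction with
  | H s IH =>
  have : Finite {t // t ⊂ s} := Finite.of_injective
    (fun t => (⟨t.1, Finset.mem_powerset.2 t.2.subset⟩ : ↥s.powerset))
    fun t u h => Subtype.ext (congrArg Subtype.val h :)
  have harg : base s ∪ ⋃ t : {t // t ⊂ s}, finsetHull next base t ∈ Pk κ lam :=
    union_mem_Pk hunc (hbase s) (iUnion_mem_Pk hκ
      ((Cardinal.lt_aleph0_of_finite _).trans (by simpa using hunc)) fun t => hCP (IH t t.2).1)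
  rw [finsetHull]
  exact hnext _ harg

theorem IsClubIn.exists_closure_points_mem {κ lam : Cardinal.{0}} (hκ : κ.IsRegular)
    (hunc : ℵ₀ < κ) {C : Set (Set Ordinal.{0})} (hC : IsClubIn κ (Pk κ lam) C) :
    ∃ G : Finset Ordinal.{0} → Set Ordinal.{0}, (∀ s, G s ∈ Pk κ lam) ∧
      ∀ a ∈ Pk κ lam, (∀ s : Finset Ordinal.{0}, ↑s ⊆ a → G s ⊆ a) → a ∈ C := by
  choose! next hnextC hnext using hC.2.1
  set G := finsetHull next fun s : Finset Ordinal.{0} => ↑s ∩ Iio lam.ord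
  have hG := finsetHull_mem_and_subset hκ hunc hC.1 (fun a ha => ⟨hnextC a ha, hnext a ha⟩)
    (base := fun s : Finset Ordinal.{0} => ↑s ∩ Iio lam.ord)
    fun s => mem_Pk_of_finite hunc (s.finite_toSet.inter_of_left _) fun _ h => h.2
  have hGmono : Monotone G := by
    intro t s hts
    rcases hts.eq_or_ssubset with rfl | hts
    · exact subset_rfl
    · exact (subset_iUnion (fun t : {t // t ⊂ s} => G t) ⟨t, hts⟩).trans
        (subset_union_right.trans (hG s).2)
  refine ⟨G, fun s => hC.1 (hG s).1, fun a ha hcl => ?_⟩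
  convert hC.isChainClosed.biUnion_finset_mem hGmono (fun s => (hG s).1) a ha.2 using 1
  refine (iUnion₂_subset fun s hs => hcl s hs).antisymm' fun x hx => ?_
  exact mem_iUnion₂.2 ⟨{x}, by simpa using hx,
    subset_union_left.trans (hG {x}).2 ⟨by simp, ha.1 x hx⟩⟩

section Ultrafilter

variable {κ lam : Cardinal.{0}} {U : Set (Set (Set Ordinal.{0}))}

theorem IsUFOn.mono {α : Type*} {X : Set α} {U : Set (Set α)} (hU : IsUFOn X U) {A B : Set α}
    (hA : A ∈ U) (hAB : A ⊆ B) (hB : B ⊆ X) : B ∈ U :=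
  hU.2.2.2.1 A hA B hAB hB

theorem IsUFOn.inter_mem {α : Type*} {X : Set α} {U : Set (Set α)} (hU : IsUFOn X U)
    {A B : Set α} (hA : A ∈ U) (hB : B ∈ U) : A ∩ B ∈ U :=
  hU.2.2.2.2.1 A hA B hB

theorem IsUFOn.nonempty_of_mem {α : Type*} {X : Set α} {U : Set (Set α)} (hU : IsUFOn X U)
    {A : Set α} (hA : A ∈ U) : A.Nonempty :=
  nonempty_iff_ne_empty.2 fun h => hU.2.2.1 (h ▸ hA)

theorem KComplete.iInter_nat_mem (hunc : ℵ₀ < κ) {X : Set (Set Ordinal.{0})}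
    (hK : KComplete κ X U) {T : ℕ → Set (Set Ordinal.{0})} (hT : ∀ n, T n ∈ U) :
    X ∩ ⋂ n, T n ∈ U := by
  rw [← sInter_range]
  exact hK _ (range_subset_iff.2 hT) ((countable_range T).le_aleph0.trans_lt (by simpa using hunc))

theorem Fine.setOf_superset_mem (hU : IsUFOn (Pk κ lam) U) (hK : KComplete κ (Pk κ lam) U)
    (hF : Fine κ lam U) {b : Set Ordinal.{0}} (hb : b ∈ Pk κ lam) :
    {a ∈ Pk κ lam | b ⊆ a} ∈ U :=
  hU.mono (hK _ (image_subset_iff.2 fun x hx => hF x (hb.1 x hx)) (mk_image_le.trans_lt hb.2))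
    (fun _ ha => ⟨ha.1, fun x hx => (ha.2 _ ⟨x, hx, rfl⟩).2⟩) fun _ ha => ha.1

/-- Induction on `s.card`, each step being a diagonal intersection over points. -/
theorem NormalUF.diag_finset_mem (hunc : ℵ₀ < κ) (hU : IsUFOn (Pk κ lam) U)
    (hK : KComplete κ (Pk κ lam) U) (hN : NormalUF κ lam U)
    {A : Finset Ordinal.{0} → Set (Set Ordinal.{0})} (hA : ∀ s, A s ∈ U) :
    {a ∈ Pk κ lam | ∀ s : Finset Ordinal.{0}, ↑s ⊆ a → a ∈ A s} ∈ U := by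
  have hbounded : ∀ (n : ℕ) (A : Finset Ordinal.{0} → Set (Set Ordinal.{0})), (∀ s, A s ∈ U) →
      {a ∈ Pk κ lam | ∀ s : Finset Ordinal.{0}, s.card ≤ n → ↑s ⊆ a → a ∈ A s} ∈ U := by
    intro n
    induction n with
    | zero =>
      intro A hA
      refine hU.mono (hA ∅) (fun a ha => ⟨hU.1 _ (hA ∅) ha, fun s hs _ => ?_⟩) fun _ ha => ha.1
      rwa [Finset.card_eq_zero.1 (Nat.le_zero.1 hs)]
    | succ n ih =>
      intro A hA
      refine hU.mono (hU.inter_mem (hN _ fun x _ => ih (fun s => A (insert x s)) fun s => hA _)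
        (ih A hA)) ?_ fun _ ha => ha.1
      rintro a ⟨⟨haP, hdiag⟩, -, hsmall⟩
      refine ⟨haP, fun s hs hsa => ?_⟩
      rcases s.eq_empty_or_nonempty with rfl | ⟨x, hx⟩
      · exact hsmall ∅ (Nat.zero_le n) hsa
      · have := (hdiag x (hsa hx)).2 (s.erase x) (by rw [Finset.card_erase_of_mem hx]; omega)
          ((Finset.coe_subset.2 (s.erase_subset x)).trans hsa)
        rwa [Finset.insert_erase hx] at this
  exact hU.mono (hK.iInter_nat_mem hunc fun n => hbounded n A hA)
    (fun a ha => ⟨ha.1, fun s hsa => (mem_iInter.1 ha.2 s.card).2 s le_rfl hsa⟩) fun _ ha => ha.1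

theorem IsClubIn.mem_of_normalUF (hκ : κ.IsRegular) (hunc : ℵ₀ < κ) (hU : IsUFOn (Pk κ lam) U)
    (hK : KComplete κ (Pk κ lam) U) (hF : Fine κ lam U) (hN : NormalUF κ lam U)
    {C : Set (Set Ordinal.{0})} (hC : IsClubIn κ (Pk κ lam) C) : C ∈ U := by
  obtain ⟨G, hGP, hGC⟩ := hC.exists_closure_points_mem hκ hunc
  exact hU.mono (hN.diag_finset_mem hunc hU hK fun s => hF.setOf_superset_mem hU hK (hGP s))
    (fun a ha => hGC a ha.1 fun s hs => (ha.2 s hs).2) hC.1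

theorem NormalUF.setOf_inter_eq_mem (hU : IsUFOn (Pk κ lam) U) (hN : NormalUF κ lam U)
    {d : Set Ordinal.{0} → Set Ordinal.{0}} (hd : IsList κ lam d) :
    {a ∈ Pk κ lam | {x | x < lam.ord ∧ {b ∈ Pk κ lam | x ∈ d b} ∈ U} ∩ a = d a} ∈ U := by
  have hdecided : ∀ x < lam.ord, {a ∈ Pk κ lam | x ∈ d a ↔ {b ∈ Pk κ lam | x ∈ d b} ∈ U} ∈ U := by
    intro x _
    by_cases hx : {b ∈ Pk κ lam | x ∈ d b} ∈ U
    · exact hU.mono hx (fun a ha => ⟨ha.1, iff_of_true ha.2 hx⟩) fun _ ha => ha.1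
    · refine hU.mono ((hU.2.2.2.2.2 _ fun _ ha => ha.1).resolve_left hx)
        (fun a ha => ⟨ha.1, iff_of_false (fun h => ha.2 ⟨ha.1, h⟩) hx⟩) fun _ ha => ha.1
  refine hU.mono (hN _ hdecided) (fun a ⟨haP, hdiag⟩ => ⟨haP, ?_⟩) fun _ ha => ha.1
  ext x
  exact ⟨fun ⟨⟨_, hxU⟩, hxa⟩ => ((hdiag x hxa).2).2 hxU,
    fun hxd => ⟨⟨haP.1 x (hd a haP hxd), ((hdiag x (hd a haP hxd)).2).1 hxd⟩, hd a haP hxd⟩⟩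

end Ultrafilter

theorem IsSupercompact.exists_isIneffBranch {κ : Cardinal.{0}} (hκ : κ.IsRegular)
    (hunc : ℵ₀ < κ) (hsc : IsSupercompact κ) {lam : Cardinal.{0}} (hlam : κ ≤ lam)
    {d : Set Ordinal.{0} → Set Ordinal.{0}} (hd : IsList κ lam d) :
    ∃ e, IsIneffBranch κ lam d e := by
  obtain ⟨U, hU, hK, hF, hN⟩ := hsc lam hlam
  have hagree := hN.setOf_inter_eq_mem hU hd
  exact ⟨_, fun x hx => hx.1, hU.1 _ hagree, fun C hC =>
    hU.nonempty_of_mem (hU.inter_mem hagree (hC.mem_of_normalUF hκ hunc hU hK hF hN))⟩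

theorem isClubIn_setOf_superset_closed {κ lam lam' : Cardinal.{0}} (hκ : κ.IsRegular)
    (hunc : ℵ₀ < κ) {b : Set Ordinal.{0}} (hb : b ∈ Pk κ lam') {g : Ordinal.{0} → Ordinal.{0}}
    (hg : ∀ x < lam.ord, g x < lam'.ord) :
    IsClubIn κ (Pk κ lam') {a ∈ Pk κ lam' | b ⊆ a ∧ ∀ x ∈ a, x < lam.ord → g x ∈ a} := by
  refine ⟨fun a ha => ha.1, fun a ha => ?_, fun δ hδ hδκ f hf hmono => ?_⟩
  · set step : Set Ordinal.{0} → Set Ordinal.{0} := fun w => w ∪ g '' (w ∩ Iio lam.ord)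
    have hstep : ∀ w ∈ Pk κ lam', step w ∈ Pk κ lam' := fun w hw =>
      union_mem_Pk hunc hw ⟨fun _ ⟨x, hx, hgx⟩ => hgx ▸ hg x hx.2,
        mk_image_le.trans_lt (inter_Iio_mem_Pk hw).2⟩
    have hw : ∀ n, step^[n] (a ∪ b) ∈ Pk κ lam' := fun n => by
      induction n with
      | zero => exact union_mem_Pk hunc ha hb
      | succ n ih => rw [Function.iterate_succ_apply']; exact hstep _ ih
    have hsub : ∀ n, step^[n] (a ∪ b) ⊆ ⋃ n : ULift.{1} ℕ, step^[n.down] (a ∪ b) :=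
      fun n => subset_iUnion_of_subset ⟨n⟩ subset_rfl
    refine ⟨_, ⟨iUnion_mem_Pk hκ ((Cardinal.mk_uLift _).trans_lt (by simpa using hunc))
      fun n => hw n.down, subset_union_right.trans (hsub 0), fun x hx hxlam => ?_⟩,
      subset_union_left.trans (hsub 0)⟩
    obtain ⟨n, hxn⟩ := mem_iUnion.1 hx
    refine hsub (n.down + 1) ?_
    rw [Function.iterate_succ_apply']
    exact Or.inr ⟨x, ⟨hxn, hxlam⟩, rfl⟩
  · refine ⟨Pk_isChainClosed hκ δ hδ hδκ f (fun β hβ => (hf β hβ).1) hmono,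
      (hf 0 hδ).2.1.trans (subset_biUnion_of_mem (u := f) hδ), fun x hx hxlam => ?_⟩
    obtain ⟨β, hβ, hxβ⟩ := mem_iUnion₂.1 hx
    exact mem_iUnion₂.2 ⟨β, hβ, (hf β hβ).2.2 x hxβ hxlam⟩

theorem exists_injOn_powerset_Pk (κ lam : Cardinal.{0}) :
    ∃ code : Set (Set Ordinal.{0}) → Ordinal.{0}, InjOn code (𝒫 Pk κ lam) ∧
      ∀ X ⊆ Pk κ lam, code X < ((2 : Cardinal.{0}) ^ (2 : Cardinal.{0}) ^ lam).ord := by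
  have hcard : #(𝒫 Pk κ lam) ≤ #(Iio ((2 : Cardinal.{0}) ^ (2 : Cardinal.{0}) ^ lam).ord) := by
    rw [Cardinal.mk_powerset, Cardinal.mk_Iio_ordinal, Cardinal.card_ord]
    have hPk : #(Pk κ lam) ≤ 2 ^ Cardinal.lift.{1} lam := by
      refine (Cardinal.mk_le_mk_of_subset fun a (ha : a ∈ Pk κ lam) =>
        show a ∈ 𝒫 Iio lam.ord from ha.1).trans ?_
      rw [Cardinal.mk_powerset, Cardinal.mk_Iio_ordinal, Cardinal.card_ord]
    simpa using Cardinal.power_le_power_left two_ne_zero hPk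
  obtain ⟨f⟩ := Cardinal.le_def _ _ |>.1 hcard
  classical
  refine ⟨fun X => if h : X ⊆ Pk κ lam then f ⟨X, h⟩ else 0, fun X hX Y hY hXY => ?_,
    fun X hX => by simpa only [dif_pos hX] using mem_Iio.1 (f ⟨X, hX⟩).2⟩
  simp only [dif_pos (show X ⊆ Pk κ lam from hX), dif_pos (show Y ⊆ Pk κ lam from hY)] at hXY
  exact congrArg Subtype.val (f.injective (Subtype.ext hXY))

def membershipList (κ lam : Cardinal.{0}) (code : Set (Set Ordinal.{0}) → Ordinal.{0})
    (a : Set Ordinal.{0}) : Set Ordinal.{0} :=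
  {β ∈ a | ∃ X ⊆ Pk κ lam, code X = β ∧ a ∩ Iio lam.ord ∈ X}

/-- What an ineffable branch `e` of `membershipList` provides (`IsIneffBranch.reflects`);
`codedFilter` inherits every ultrafilter property from it. -/
def Reflects (κ lam lam' : Cardinal.{0}) (code : Set (Set Ordinal.{0}) → Ordinal.{0})
    (e : Set Ordinal.{0}) : Prop :=
  ∀ b ∈ Pk κ lam', ∀ g : Ordinal.{0} → Ordinal.{0}, (∀ x < lam.ord, g x < lam'.ord) →
    ∃ a ∈ Pk κ lam', b ⊆ a ∧ (∀ x ∈ a, x < lam.ord → g x ∈ a) ∧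
      ∀ X ⊆ Pk κ lam, code X ∈ a → (a ∩ Iio lam.ord ∈ X ↔ code X ∈ e)

def codedFilter (κ lam : Cardinal.{0}) (code : Set (Set Ordinal.{0}) → Ordinal.{0})
    (e : Set Ordinal.{0}) : Set (Set (Set Ordinal.{0})) :=
  {Y | Y ⊆ Pk κ lam ∧ code Y ∈ e}

section Reflection

variable {κ lam lam' : Cardinal.{0}} {code : Set (Set Ordinal.{0}) → Ordinal.{0}}
  {e : Set Ordinal.{0}}

theorem isList_membershipList : IsList κ lam' (membershipList κ lam code) :=
  fun _ _ _ hβ => hβ.1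

theorem IsIneffBranch.reflects (hκ : κ.IsRegular) (hunc : ℵ₀ < κ)
    (hcode : InjOn code (𝒫 Pk κ lam)) (he : IsIneffBranch κ lam' (membershipList κ lam code) e) :
    Reflects κ lam lam' code e := by
  intro b hb g hg
  obtain ⟨a, ⟨haP, hae⟩, -, hba, hga⟩ := he.2.2 _ (isClubIn_setOf_superset_closed hκ hunc hb hg)
  refine ⟨a, haP, hba, hga, fun X hX hXa => ⟨fun hmem => ?_, fun hXe => ?_⟩⟩
  · have : code X ∈ membershipList κ lam code a := ⟨hXa, X, hX, rfl, hmem⟩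
    exact (hae ▸ this).1
  · obtain ⟨-, X', hX', hcodeX', hmem⟩ : code X ∈ membershipList κ lam code a := hae ▸ ⟨hXe, hXa⟩
    rwa [hcode hX' hX hcodeX'] at hmem

theorem Reflects.exists_of_small (hr : Reflects κ lam lam' code e)
    (hunc : ℵ₀ < κ) (hbound : ∀ X ⊆ Pk κ lam, code X < lam'.ord) {b : Set Ordinal.{0}}
    (hb : b ∈ Pk κ lam') {𝒳 : Set (Set (Set Ordinal.{0}))} (h𝒳 : 𝒳 ⊆ 𝒫 Pk κ lam)
    (hcard : #𝒳 < Cardinal.lift.{1} κ) :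
    ∃ a ∈ Pk κ lam', b ⊆ a ∧ ∀ X ∈ 𝒳, (a ∩ Iio lam.ord ∈ X ↔ code X ∈ e) := by
  have hcodes : b ∪ code '' 𝒳 ∈ Pk κ lam' := union_mem_Pk hunc hb
    ⟨fun _ ⟨X, hX, hXβ⟩ => hXβ ▸ hbound X (h𝒳 hX), mk_image_le.trans_lt hcard⟩
  obtain ⟨a, haP, hba, -, hrefl⟩ :=
    hr _ hcodes (fun _ => code ∅) fun _ _ => hbound ∅ (empty_subset _)
  exact ⟨a, haP, subset_union_left.trans hba, fun X hX =>
    hrefl X (h𝒳 hX) (hba (Or.inr (mem_image_of_mem code hX)))⟩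

theorem Reflects.isUFOn (hr : Reflects κ lam lam' code e) (hunc : ℵ₀ < κ)
    (hbound : ∀ X ⊆ Pk κ lam, code X < lam'.ord) :
    IsUFOn (Pk κ lam) (codedFilter κ lam code e) := by
  have hfin : ∀ 𝒳 ⊆ 𝒫 Pk κ lam, 𝒳.Finite →
      ∃ a ∈ Pk κ lam', ∀ X ∈ 𝒳, (a ∩ Iio lam.ord ∈ X ↔ code X ∈ e) := fun 𝒳 h𝒳 hfin =>
    (hr.exists_of_small hunc hbound (mem_Pk_of_finite hunc finite_empty fun _ h => h.elim) h𝒳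
      (hfin.lt_aleph0.trans (by simpa using hunc))).imp fun a ⟨haP, _, ha⟩ => ⟨haP, ha⟩
  refine ⟨fun A hA => hA.1, ?_, fun h => ?_, fun A hA B hAB hB => ?_, fun A hA B hB => ?_,
    fun A hA => ?_⟩
  · obtain ⟨a, haP, ha⟩ := hfin {Pk κ lam} (by simp) (finite_singleton _)
    exact ⟨subset_rfl, (ha _ rfl).1 (inter_Iio_mem_Pk haP)⟩
  · obtain ⟨a, -, ha⟩ := hfin {∅} (by simp) (finite_singleton _)
    exact (ha ∅ rfl).2 h.2
  · obtain ⟨a, -, ha⟩ := hfin {A, B} (by simp [pair_subset_iff, hA.1, hB]) (toFinite _)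
    exact ⟨hB, (ha B (by simp)).1 (hAB ((ha A (by simp)).2 hA.2))⟩
  · have hAB : A ∩ B ⊆ Pk κ lam := inter_subset_left.trans hA.1
    obtain ⟨a, -, ha⟩ := hfin {A, B, A ∩ B} (by simp [insert_subset_iff, hA.1, hB.1, hAB])
      (toFinite _)
    exact ⟨hAB, (ha _ (by simp)).1 ⟨(ha A (by simp)).2 hA.2, (ha B (by simp)).2 hB.2⟩⟩
  · obtain ⟨a, haP, ha⟩ := hfin {A, Pk κ lam \ A} (by simp [pair_subset_iff, hA]) (toFinite _)
    by_cases hmem : a ∩ Iio lam.ord ∈ A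
    · exact Or.inl ⟨hA, (ha A (by simp)).1 hmem⟩
    · exact Or.inr ⟨sdiff_subset, (ha _ (by simp)).1 ⟨inter_Iio_mem_Pk haP, hmem⟩⟩

theorem Reflects.kComplete (hr : Reflects κ lam lam' code e) (hunc : ℵ₀ < κ)
    (hbound : ∀ X ⊆ Pk κ lam, code X < lam'.ord) :
    KComplete κ (Pk κ lam) (codedFilter κ lam code e) := by
  intro s hs hcard
  have hsub : insert (Pk κ lam ∩ ⋂₀ s) s ⊆ 𝒫 Pk κ lam :=
    insert_subset inter_subset_left fun Y hY => (hs hY).1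
  obtain ⟨a, haP, -, ha⟩ := hr.exists_of_small hunc hbound
    (mem_Pk_of_finite hunc finite_empty fun _ h => h.elim) hsub
    (mk_insert_le.trans_lt (Cardinal.add_lt_of_lt (by simpa using hunc.le) hcard
      (Cardinal.one_lt_aleph0.trans (by simpa using hunc))))
  refine ⟨inter_subset_left, (ha _ (mem_insert _ _)).1 ⟨inter_Iio_mem_Pk haP, fun Y hY => ?_⟩⟩
  exact (ha Y (mem_insert_of_mem _ hY)).2 (hs hY).2

theorem Reflects.fine (hr : Reflects κ lam lam' code e) (hunc : ℵ₀ < κ)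
    (hbound : ∀ X ⊆ Pk κ lam, code X < lam'.ord) (hlam : lam ≤ lam') :
    Fine κ lam (codedFilter κ lam code e) := by
  intro x hx
  have hY : {a ∈ Pk κ lam | x ∈ a} ⊆ Pk κ lam := fun _ ha => ha.1
  obtain ⟨a, haP, hxa, ha⟩ := hr.exists_of_small hunc hbound
    (mem_Pk_of_finite hunc (finite_singleton x) fun _ h => h ▸ hx.trans_le (Cardinal.ord_le_ord.2 hlam))
    (singleton_subset_iff.2 hY) ((Cardinal.lt_aleph0_of_finite _).trans (by simpa using hunc))
  exact ⟨hY, (ha _ rfl).1 ⟨inter_Iio_mem_Pk haP, hxa rfl, hx⟩⟩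

/-- Closing `a` under `x ↦ code (A x)` makes `a ∩ λ` lie in every `A x` with `x ∈ a`. -/
theorem Reflects.normalUF (hr : Reflects κ lam lam' code e) (hunc : ℵ₀ < κ)
    (hbound : ∀ X ⊆ Pk κ lam, code X < lam'.ord) :
    NormalUF κ lam (codedFilter κ lam code e) := by
  intro A hA
  have hZ : {a ∈ Pk κ lam | ∀ x ∈ a, a ∈ A x} ⊆ Pk κ lam := fun _ ha => ha.1
  obtain ⟨a, haP, hZa, hga, hrefl⟩ := hr {code {a ∈ Pk κ lam | ∀ x ∈ a, a ∈ A x}}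
    (mem_Pk_of_finite hunc (finite_singleton _) fun _ h => h ▸ hbound _ hZ)
    (fun x => code (A x)) fun x hx => hbound _ (hA x hx).1
  refine ⟨hZ, (hrefl _ hZ (hZa rfl)).1 ⟨inter_Iio_mem_Pk haP, fun x ⟨hxa, hxlam⟩ => ?_⟩⟩
  exact (hrefl _ (hA x hxlam).1 (hga x hxa hxlam)).2 (hA x hxlam).2

end Reflection

theorem isSupercompact_of_forall_exists_isIneffBranch {κ : Cardinal.{0}} (hκ : κ.IsRegular)
    (hunc : ℵ₀ < κ)
    (hbranch : ∀ lam : Cardinal.{0}, κ ≤ lam →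
      ∀ d, IsList κ lam d → ∃ e, IsIneffBranch κ lam d e) :
    IsSupercompact κ := by
  intro lam hlam
  have hlam' : lam ≤ (2 : Cardinal.{0}) ^ (2 : Cardinal.{0}) ^ lam :=
    (Cardinal.cantor lam).le.trans (Cardinal.cantor _).le
  obtain ⟨code, hinj, hbound⟩ := exists_injOn_powerset_Pk κ lam
  obtain ⟨e, he⟩ := hbranch _ (hlam.trans hlam') _ isList_membershipList
  have hr := he.reflects hκ hunc hinj
  exact ⟨_, hr.isUFOn hunc hbound, hr.kComplete hunc hbound, hr.fine hunc hbound hlam',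
    hr.normalUF hunc hbound⟩

theorem supercompact_iff_lists_have_ineffable_branches (κ : Cardinal.{0})
    (hreg : κ.IsRegular) (hunc : ℵ₀ < κ) :
    IsSupercompact κ ↔
      ∀ lam : Cardinal.{0}, κ ≤ lam →
        ∀ d, IsList κ lam d → ∃ e, IsIneffBranch κ lam d e :=
  ⟨fun hsc _ hlam _ hd => hsc.exists_isIneffBranch hreg hunc hlam hd,
    isSupercompact_of_forall_exists_isIneffBranch hreg hunc⟩
end
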